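/- For every n ≥ 1 and all j, k ∈ ℕ, the number of multisets of cardinality n of elements of ℕ×ℕ whose first coordinates sum to j and whose second coordinates sum to k equals the number of triples (σ, λ, μ), where σ is a permutation of {1,…,n} and λ, μ are partitions with at most n parts, such that maj(σ) + |λ| = j and maj(σ^{-1}) + |μ| = k. -/

import Mathlib

attribute [local instance] Classical.propDecidable

/-- The set of (1-based) descents of a permutation `σ` of `{1,…,n}`. -/
noncomputable def descSet {n : ℕ} (σ : Equiv.Perm (Fin n)) : Finset ℕ :=
  (Finset.range n).filter fun i =>
    ∃ (_ : 1 ≤ i) (h2 : i < n),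
      σ ⟨i, h2⟩ < σ ⟨i - 1, Nat.lt_of_le_of_lt (Nat.sub_le i 1) h2⟩

/-- Major index: the sum of the descents. -/
noncomputable def maj {n : ℕ} (σ : Equiv.Perm (Fin n)) : ℕ := ∑ i ∈ descSet σ, i

/-- Partitions with at most `n` parts: antitone vectors in `ℕ^n`. -/
def PartN (n : ℕ) := {l : Fin n → ℕ // ∀ i j : Fin n, i ≤ j → l j ≤ l i}

/-!
Send `(σ, λ, μ)` to the multiset of the pairs `(λᵢ + dᵢ, μ_{σ i} + e_{σ i})`, where `dᵢ`
(resp. `e_r`) is the number of descents of `σ` (resp. `σ⁻¹`) after position `i` (resp. `r`).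
Listed by `i`, these pairs decrease lexicographically, and every lexicographically decreasing
sequence arises from exactly one triple: `σ⁻¹` is the stable sort of the second coordinates, and
`λ`, `μ` are what remains after subtracting the descent counts. Since `∑ᵢ dᵢ = maj σ`, the
coordinate sums are `maj σ + |λ|` and `maj σ⁻¹ + |μ|`.
-/

open Finset OrderDual

section Descents

variable {n : ℕ}

theorem Fin.antitone_of_succ_le {α : Type*} [Preorder α] {f : Fin n → α}
    (h : ∀ i (hi : i + 1 < n), f ⟨i + 1, hi⟩ ≤ f ⟨i, by omega⟩) : Antitone f := by
  cases n with
  | zero => exact fun i => i.elim0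
  | succ n => exact Fin.antitone_iff_succ_le.2 fun i => h i i.succ.isLt

theorem succ_mem_descSet_iff (σ : Equiv.Perm (Fin n)) {i : ℕ} (h : i + 1 < n) :
    i + 1 ∈ descSet σ ↔ σ ⟨i + 1, h⟩ < σ ⟨i, by omega⟩ := by
  simp [descSet, h]

theorem lt_of_mem_descSet {σ : Equiv.Perm (Fin n)} {t : ℕ} (ht : t ∈ descSet σ) : t < n :=
  mem_range.1 (mem_filter.1 ht).1

theorem lt_succ_of_succ_notMem_descSet (σ : Equiv.Perm (Fin n)) {i : ℕ} (h : i + 1 < n)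
    (hd : i + 1 ∉ descSet σ) : σ ⟨i, by omega⟩ < σ ⟨i + 1, h⟩ := by
  rw [succ_mem_descSet_iff σ h, not_lt] at hd
  exact hd.lt_of_ne (σ.injective.ne (by simp [Fin.ext_iff]))

noncomputable def numDescentsAfter (σ : Equiv.Perm (Fin n)) (i : ℕ) : ℕ :=
  #{t ∈ descSet σ | i < t}

theorem numDescentsAfter_eq_succ_add (σ : Equiv.Perm (Fin n)) (i : ℕ) :
    numDescentsAfter σ i = numDescentsAfter σ (i + 1) + if i + 1 ∈ descSet σ then 1 else 0 := by
  have hsplit : {t ∈ descSet σ | i < t} = {t ∈ descSet σ | i + 1 < t ∨ t = i + 1} :=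
    filter_congr fun t _ => by omega
  rw [numDescentsAfter, numDescentsAfter, hsplit, filter_or,
    card_union_of_disjoint (disjoint_filter.2 fun t _ h h' => by omega), filter_eq']
  split_ifs <;> simp

theorem numDescentsAfter_eq_zero (σ : Equiv.Perm (Fin n)) {i : ℕ} (hi : n ≤ i + 1) :
    numDescentsAfter σ i = 0 := by
  refine card_eq_zero.2 (filter_eq_empty_iff.2 fun t ht => ?_)
  have := lt_of_mem_descSet ht
  omega

theorem sum_numDescentsAfter (σ : Equiv.Perm (Fin n)) :
    ∑ i : Fin n, numDescentsAfter σ i = maj σ := by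
  simp only [numDescentsAfter, card_filter]
  rw [sum_comm, maj]
  refine sum_congr rfl fun t ht => ?_
  rw [← card_filter, Fin.card_filter_val_lt, min_eq_right (lt_of_mem_descSet ht).le]

end Descents

section Compatible

variable {n : ℕ} {σ : Equiv.Perm (Fin n)} {f : Fin n → ℕ}

/-- Equivalently (`isCompatible_iff_succ`), `f` is weakly decreasing and drops strictly across
every descent of `σ`. -/
def IsCompatible (σ : Equiv.Perm (Fin n)) (f : Fin n → ℕ) : Prop :=
  Antitone f ∧ ∀ ⦃i j⦄, i < j → f i = f j → σ i < σ j

theorem isCompatible_iff_succ : IsCompatible σ f ↔ ∀ i (h : i + 1 < n),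
    f ⟨i + 1, h⟩ + (if i + 1 ∈ descSet σ then 1 else 0) ≤ f ⟨i, by omega⟩ := by
  constructor
  · intro hf i h
    have hle : f ⟨i + 1, h⟩ ≤ f ⟨i, by omega⟩ := hf.1 (Fin.mk_le_mk.2 (by omega))
    split_ifs with hd
    · refine Nat.succ_le_of_lt (hle.lt_of_ne fun he => ?_)
      exact (succ_mem_descSet_iff σ h).1 hd |>.not_gt (hf.2 (Fin.mk_lt_mk.2 (by omega)) he.symm)
    · simpa using hle
  · intro hf
    have hlex : Antitone fun i => toLex (f i, toDual (σ i)) := by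
      refine Fin.antitone_of_succ_le fun i h => Prod.Lex.toLex_le_toLex.2 ?_
      have hi := hf i h
      by_cases hd : i + 1 ∈ descSet σ
      · rw [if_pos hd] at hi
        exact Or.inl hi
      · rw [if_neg hd, add_zero] at hi
        exact hi.lt_or_eq.imp_right fun he =>
          ⟨he, toDual_le_toDual.2 (lt_succ_of_succ_notMem_descSet σ h hd).le⟩
    refine ⟨fun i j hij => ?_, fun i j hij he => ?_⟩
    · exact (Prod.Lex.toLex_le_toLex.1 (hlex hij)).elim le_of_lt fun h => h.1.le
    · obtain hlt | ⟨-, hσ⟩ := Prod.Lex.toLex_le_toLex.1 (hlex hij.le)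
      · exact absurd he hlt.ne'
      · exact (toDual_le_toDual.1 hσ).lt_of_ne (σ.injective.ne hij.ne)

theorem isCompatible_iff_eq_sort : IsCompatible σ f ↔ σ = Tuple.sort (toDual ∘ f ∘ ⇑σ⁻¹) := by
  rw [Tuple.eq_sort_iff, IsCompatible, ← monotone_toDual_comp_iff]
  simp [Function.comp_def]

noncomputable def addDescents (σ : Equiv.Perm (Fin n)) (l : Fin n → ℕ) (i : Fin n) : ℕ :=
  l i + numDescentsAfter σ i

theorem isCompatible_addDescents {l : Fin n → ℕ} (hl : Antitone l) :
    IsCompatible σ (addDescents σ l) := by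
  refine isCompatible_iff_succ.2 fun i h => ?_
  have hle : l ⟨i + 1, h⟩ ≤ l ⟨i, by omega⟩ := hl (Fin.mk_le_mk.2 (Nat.le_succ i))
  simp only [addDescents, numDescentsAfter_eq_succ_add σ i]
  omega

theorem IsCompatible.antitone_sub_numDescentsAfter (hf : IsCompatible σ f) :
    Antitone fun i => (f i : ℤ) - numDescentsAfter σ i :=
  Fin.antitone_of_succ_le fun i h => by
    have hstep := isCompatible_iff_succ.1 hf i h
    have hcount := numDescentsAfter_eq_succ_add σ i
    split_ifs at hstep hcount <;> simp only <;> omega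

theorem IsCompatible.numDescentsAfter_le (hf : IsCompatible σ f) (i : Fin n) :
    numDescentsAfter σ i ≤ f i := by
  have hlast := hf.antitone_sub_numDescentsAfter (show i ≤ ⟨n - 1, Nat.sub_one_lt_of_lt i.isLt⟩
    from Fin.le_iff_val_le_val.2 (Nat.le_sub_one_of_lt i.isLt))
  have hzero := numDescentsAfter_eq_zero σ (i := n - 1) (by omega)
  simp only at hlast
  omega

theorem IsCompatible.exists_addDescents_eq (hf : IsCompatible σ f) :
    ∃ l : PartN n, addDescents σ l.1 = f := by
  refine ⟨⟨fun i => f i - numDescentsAfter σ i, fun i j hij => ?_⟩, ?_⟩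
  · have hsub := hf.antitone_sub_numDescentsAfter hij
    have hi := hf.numDescentsAfter_le i
    have hj := hf.numDescentsAfter_le j
    dsimp only at hsub ⊢
    omega
  · exact funext fun i => Nat.sub_add_cancel (hf.numDescentsAfter_le i)

end Compatible

section Biword

variable {n : ℕ} {σ σ' : Equiv.Perm (Fin n)} {a a' c c' : Fin n → ℕ}

def biword (σ : Equiv.Perm (Fin n)) (a c : Fin n → ℕ) (i : Fin n) : ℕ ×ₗ ℕ :=
  toLex (a i, c (σ i))

theorem antitone_biword (ha : IsCompatible σ a) (hc : Antitone c) : Antitone (biword σ a c) := by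
  intro i j hij
  refine Prod.Lex.toLex_le_toLex.2 ((ha.1 hij).lt_or_eq.imp_right fun he => ⟨he, ?_⟩)
  obtain rfl | hlt := hij.eq_or_lt
  · rfl
  · exact hc (ha.2 hlt he.symm).le

theorem IsCompatible.of_antitone_biword (hw : Antitone (biword σ a c))
    (hc : IsCompatible σ⁻¹ c) : IsCompatible σ a := by
  refine ⟨fun i j hij => (Prod.Lex.toLex_le_toLex.1 (hw hij)).elim le_of_lt fun h => h.1.le,
    fun i j hij he => ?_⟩
  have hcle : c (σ j) ≤ c (σ i) :=
    ((Prod.Lex.toLex_le_toLex.1 (hw hij.le)).resolve_left (he ▸ lt_irrefl _)).2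
  by_contra hσ
  have hlt : σ j < σ i := (not_lt.1 hσ).lt_of_ne (σ.injective.ne hij.ne')
  have hji := hc.2 hlt (le_antisymm hcle (hc.1 hlt.le))
  simp only [Equiv.Perm.coe_inv, Equiv.symm_apply_apply] at hji
  exact hji.not_gt hij

theorem eq_of_biword_eq (hc : IsCompatible σ⁻¹ c) (hc' : IsCompatible σ'⁻¹ c')
    (h : biword σ a c = biword σ' a' c') : σ = σ' ∧ a = a' ∧ c = c' := by
  have hsnd : ∀ i, c (σ i) = c' (σ' i) := fun i => congrArg (fun x => (ofLex x).2) (congrFun h i)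
  have hσ : σ = σ' := by
    rw [← inv_inj, isCompatible_iff_eq_sort.1 hc, isCompatible_iff_eq_sort.1 hc']
    simp only [inv_inv, Function.comp_def, hsnd]
  subst hσ
  refine ⟨rfl, funext fun i => congrArg (fun x => (ofLex x).1) (congrFun h i), funext fun r => ?_⟩
  simpa using hsnd (σ⁻¹ r)

end Biword

section SortedTuples

variable {n : ℕ} {α : Type*}

theorem eq_of_antitone_of_map_univ_eq [PartialOrder α] {g g' : Fin n → α} (hg : Antitone g)
    (hg' : Antitone g') (h : univ.val.map g = univ.val.map g') : g = g' := by
  rw [Fin.univ_val_map, Fin.univ_val_map, Multiset.coe_eq_coe] at h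
  exact List.ofFn_injective (h.eq_of_pairwise' hg.sortedGE_ofFn.pairwise hg'.sortedGE_ofFn.pairwise)

theorem exists_antitone_map_univ_eq [LinearOrder α] (m : Multiset α) (hm : m.card = n) :
    ∃ g : Fin n → α, Antitone g ∧ univ.val.map g = m := by
  obtain ⟨l, rfl⟩ := Quotient.exists_rep m
  rw [Multiset.quot_mk_to_coe, Multiset.coe_card] at hm
  subst hm
  refine ⟨l.get ∘ Tuple.sort (toDual ∘ l.get),
    monotone_toDual_comp_iff.1 (Tuple.monotone_sort _), ?_⟩
  rw [← Multiset.map_map, Multiset.map_univ_val_equiv, Fin.univ_val_map, List.ofFn_get]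
  rfl

end SortedTuples

section Bijection

variable {n : ℕ}

noncomputable def toMultiset (t : Equiv.Perm (Fin n) × PartN n × PartN n) : Multiset (ℕ × ℕ) :=
  (univ.val.map (biword t.1 (addDescents t.1 t.2.1.1) (addDescents t.1⁻¹ t.2.2.1))).map ofLex

theorem card_toMultiset (t : Equiv.Perm (Fin n) × PartN n × PartN n) :
    (toMultiset t).card = n := by
  simp [toMultiset]

theorem sum_fst_toMultiset (t : Equiv.Perm (Fin n) × PartN n × PartN n) :
    ((toMultiset t).map Prod.fst).sum = maj t.1 + ∑ i, t.2.1.1 i := by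
  simp only [toMultiset, Multiset.map_map, ← sum_eq_multiset_sum]
  simp [biword, addDescents, sum_add_distrib, sum_numDescentsAfter, add_comm]

theorem sum_snd_toMultiset (t : Equiv.Perm (Fin n) × PartN n × PartN n) :
    ((toMultiset t).map Prod.snd).sum = maj t.1⁻¹ + ∑ i, t.2.2.1 i := by
  simp only [toMultiset, Multiset.map_map, ← sum_eq_multiset_sum]
  change ∑ i, addDescents t.1⁻¹ t.2.2.1 (t.1 i) = _
  rw [Equiv.sum_comp t.1 (addDescents t.1⁻¹ t.2.2.1)]
  simp [addDescents, sum_add_distrib, sum_numDescentsAfter, add_comm]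

theorem toMultiset_injective : Function.Injective (toMultiset (n := n)) := by
  rintro ⟨σ, l, m⟩ ⟨σ', l', m'⟩ h
  have hw := eq_of_antitone_of_map_univ_eq
    (antitone_biword (isCompatible_addDescents l.2) (isCompatible_addDescents m.2).1)
    (antitone_biword (isCompatible_addDescents l'.2) (isCompatible_addDescents m'.2).1)
    (Multiset.map_injective ofLex.injective h)
  obtain ⟨rfl, hla, hmu⟩ :=
    eq_of_biword_eq (isCompatible_addDescents m.2) (isCompatible_addDescents m'.2) hw
  have hl : l = l' := Subtype.ext (funext fun i => by simpa [addDescents] using congrFun hla i)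
  have hm : m = m' := Subtype.ext (funext fun r => by simpa [addDescents] using congrFun hmu r)
  rw [hl, hm]

theorem exists_toMultiset_eq (m : Multiset (ℕ × ℕ)) (hm : m.card = n) :
    ∃ t : Equiv.Perm (Fin n) × PartN n × PartN n, toMultiset t = m := by
  obtain ⟨g, hg, hgm⟩ := exists_antitone_map_univ_eq (m.map toLex) (by simpa using hm)
  set b : Fin n → ℕ := fun i => (ofLex (g i)).2
  set τ := Tuple.sort (toDual ∘ b)
  have hc : IsCompatible τ⁻¹⁻¹ (b ∘ τ) :=
    isCompatible_iff_eq_sort.2 (by simp [Function.comp_def, τ])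
  have hgw : biword τ⁻¹ (fun i => (ofLex (g i)).1) (b ∘ τ) = g :=
    funext fun i => by simp [biword, b]
  obtain ⟨l, hl⟩ := (IsCompatible.of_antitone_biword (hgw ▸ hg) hc).exists_addDescents_eq
  obtain ⟨μ, hμ⟩ := hc.exists_addDescents_eq
  refine ⟨(τ⁻¹, l, μ), ?_⟩
  rw [toMultiset, hl, hμ, hgw, hgm, Multiset.map_map]
  exact Multiset.map_id m

end Bijection

theorem stmt14_general (n : ℕ) (j k : ℕ) :
    Set.ncard {m : Multiset (ℕ × ℕ) | Multiset.card m = n ∧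
      (m.map Prod.fst).sum = j ∧ (m.map Prod.snd).sum = k} =
    Set.ncard {t : Equiv.Perm (Fin n) × PartN n × PartN n |
      maj t.1 + (∑ i : Fin n, t.2.1.1 i) = j ∧
      maj t.1⁻¹ + (∑ i : Fin n, t.2.2.1 i) = k} := by
  rw [← Set.ncard_image_of_injective _ toMultiset_injective]
  congr 1
  ext m
  simp only [Set.mem_image]
  constructor
  · rintro ⟨hcard, hj, hk⟩
    obtain ⟨t, rfl⟩ := exists_toMultiset_eq m hcard
    exact ⟨t, ⟨(sum_fst_toMultiset t).symm.trans hj, (sum_snd_toMultiset t).symm.trans hk⟩, rfl⟩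
  · rintro ⟨t, ⟨hj, hk⟩, rfl⟩
    exact ⟨card_toMultiset t, (sum_fst_toMultiset t).trans hj, (sum_snd_toMultiset t).trans hk⟩

/-- The number of `n`-cell multisets in `ℕ × ℕ` with coordinate sums `(j,k)` equals
the number of triples `(σ, λ, μ)` with `maj σ + |λ| = j` and `maj σ⁻¹ + |μ| = k`. -/
theorem stmt14 (n : ℕ) (hn : 1 ≤ n) (j k : ℕ) :
    Set.ncard {m : Multiset (ℕ × ℕ) | Multiset.card m = n ∧
      (m.map Prod.fst).sum = j ∧ (m.map Prod.snd).sum = k} =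
    Set.ncard {t : Equiv.Perm (Fin n) × PartN n × PartN n |
      maj t.1 + (∑ i : Fin n, t.2.1.1 i) = j ∧
      maj t.1⁻¹ + (∑ i : Fin n, t.2.2.1 i) = k} :=
  stmt14_general n j k
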